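/- arXiv:1605.09600 — 5 statements merged into one kernel-verified Lean document; each statement's English description precedes it below -/
import Mathlib

section
/- Let n ≥ 1. With vol the additive Haar measure on the space Mat(n,F) of n×n matrices over F (identified with F^{n²}) normalized so that vol(Mat(n,O_F)) = 1, the group GL(n,O_F) of n×n matrices over O_F that are invertible with inverse over O_F satisfies vol(GL(n,O_F)) = ∏_{j=1}^{n} (1 − q^{-j}). -/
open MeasureTheory

/-- The set of `n × n` matrices over the ring of integers `O_F = {x : ‖x‖ ≤ 1}`
that are invertible with inverse over `O_F`. -/
def GLO {F : Type*} [NormedField F] (n : ℕ) : Set (Matrix (Fin n) (Fin n) F) :=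
  {g | (∀ i j, ‖g i j‖ ≤ 1) ∧
    ∃ h : Matrix (Fin n) (Fin n) F, (∀ i j, ‖h i j‖ ≤ 1) ∧ g * h = 1 ∧ h * g = 1}

/-- The Borel σ-algebra on matrices, viewed as a product. -/
noncomputable instance matrixMeasurableSpace {l o α : Type*} [MeasurableSpace α] :
    MeasurableSpace (Matrix l o α) := MeasurableSpace.pi

/-!
A matrix over `O_F` is invertible iff its reduction modulo the maximal ideal is invertible over the
residue field `k` (both are detected by the determinant, and an element of the local ring `O_F` is
a unit iff its residue is nonzero). So `GL(n, O_F)` is the disjoint union, over `r ∈ GL(n, k)`, of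
the cells of integral matrices reducing to `r`. Each cell is a product of `n²` open unit balls, and
each such ball has volume `q⁻¹` because `O_F` is the disjoint union of `q` translates of it. Hence
the volume is `|GL(n, k)| q^{-n²} = ∏_{i<n} (q^n - q^i) q^{-n} = ∏_{j=1}^n (1 - q^{-j})`.
-/

-- Mathlib's `𝒪[K]`, `𝓀[K]` come with a scoped `Valued K` instance, which would give a second
-- (defeq but syntactically different) topology on `K` and spoil the statement's `BorelSpace F`.
local notation "𝒪[" K "]" => Valuation.integer (NormedField.valuation : Valuation K NNReal)

local notation "𝓀[" K "]" => IsLocalRing.ResidueField ↥𝒪[K]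

open IsLocalRing Function

section Integers

variable {K : Type*} [NormedField K] [IsUltrametricDist K]

lemma mem_integer_iff_norm_le_one {x : K} : x ∈ 𝒪[K] ↔ ‖x‖ ≤ 1 := by
  rw [Valuation.mem_integer_iff]
  exact NNReal.coe_le_coe.symm

lemma norm_coe_integer_le_one (x : 𝒪[K]) : ‖(x : K)‖ ≤ 1 :=
  mem_integer_iff_norm_le_one.mp x.2

lemma mem_maximalIdeal_iff_norm_lt_one {x : 𝒪[K]} : x ∈ maximalIdeal 𝒪[K] ↔ ‖(x : K)‖ < 1 := by
  rw [mem_maximalIdeal, mem_nonunits_iff,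
    (Valuation.integer.integers _).isUnit_iff_valuation_eq_one, ← NNReal.coe_inj]
  exact (norm_coe_integer_le_one x).lt_iff_ne.symm

lemma residue_eq_residue_iff_norm_sub_lt_one {x y : 𝒪[K]} :
    residue 𝒪[K] x = residue 𝒪[K] y ↔ ‖(x : K) - y‖ < 1 := by
  rw [← sub_eq_zero, ← map_sub, residue_eq_zero_iff, mem_maximalIdeal_iff_norm_lt_one,
    AddSubgroupClass.coe_sub]

def residueClass (c : 𝓀[K]) : Set K := Subtype.val '' (residue 𝒪[K] ⁻¹' {c})

lemma residueClass_residue (x : 𝒪[K]) :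
    residueClass (residue 𝒪[K] x) = Metric.ball (x : K) 1 := by
  ext y
  rw [Metric.mem_ball, dist_eq_norm]
  constructor
  · rintro ⟨y, hy, rfl⟩
    exact residue_eq_residue_iff_norm_sub_lt_one.mp hy
  · intro hy
    have hy1 : ‖y‖ ≤ 1 := by
      rw [← sub_add_cancel y x]
      exact (IsUltrametricDist.norm_add_le_max _ _).trans
        (max_le hy.le (norm_coe_integer_le_one x))
    exact ⟨⟨y, mem_integer_iff_norm_le_one.mpr hy1⟩,
      residue_eq_residue_iff_norm_sub_lt_one.mpr hy, rfl⟩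

lemma pairwise_disjoint_residueClass : Pairwise (Disjoint on (residueClass (K := K))) :=
  fun _ _ hcd => Set.disjoint_image_of_injective Subtype.val_injective
    ((Set.disjoint_singleton.mpr hcd).preimage _)

lemma iUnion_residueClass : ⋃ c, residueClass c = {x : K | ‖x‖ ≤ 1} := by
  ext x
  simp [residueClass, mem_integer_iff_norm_le_one]

lemma natCard_residueField_eq_card {C : Finset K} (hC : ∀ c ∈ C, ‖c‖ ≤ 1)
    (hCres : ∀ x : K, ‖x‖ ≤ 1 → ∃! c, c ∈ C ∧ ‖x - c‖ < 1) : Nat.card 𝓀[K] = C.card := by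
  let f : C → 𝓀[K] := fun c => residue 𝒪[K] ⟨c, mem_integer_iff_norm_le_one.mpr (hC c c.2)⟩
  have hf : Function.Bijective f := by
    constructor
    · intro c d hcd
      have hcd' := residue_eq_residue_iff_norm_sub_lt_one.mp hcd
      have hcc : (c : K) ∈ C ∧ ‖(c : K) - c‖ < 1 := ⟨c.2, by simp⟩
      exact Subtype.ext ((hCres c (hC c c.2)).unique hcc ⟨d.2, hcd'⟩)
    · intro r
      obtain ⟨x, rfl⟩ := residue_surjective r
      obtain ⟨c, ⟨hcC, hxc⟩, -⟩ := hCres x (norm_coe_integer_le_one x)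
      exact ⟨⟨c, hcC⟩, residue_eq_residue_iff_norm_sub_lt_one.mpr (by rwa [norm_sub_rev])⟩
  rw [← Nat.card_eq_of_bijective f hf, Nat.card_eq_finsetCard]

end Integers

section Measure

variable {K : Type*} [NormedField K] [MeasurableSpace K]

lemma sigmaFinite_of_one_lt_norm [LocallyCompactSpace K] (μ : Measure K)
    [IsFiniteMeasureOnCompacts μ] {a : K} (ha : 1 < ‖a‖) : SigmaFinite μ := by
  let _ : NontriviallyNormedField K := { ‹NormedField K› with non_trivial := ⟨a, ha⟩ }
  have := ProperSpace.of_nontriviallyNormedField_of_weaklyLocallyCompactSpace K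
  infer_instance

variable [BorelSpace K] [IsUltrametricDist K] (μ : Measure K) [μ.IsAddHaarMeasure]

lemma measurableSet_residueClass (c : 𝓀[K]) : MeasurableSet (residueClass c) := by
  obtain ⟨x, rfl⟩ := residue_surjective c
  rw [residueClass_residue]
  exact measurableSet_ball

lemma measure_residueClass (c : 𝓀[K]) : μ (residueClass c) = μ (Metric.ball 0 1) := by
  obtain ⟨x, rfl⟩ := residue_surjective c
  rw [residueClass_residue, Measure.addHaar_ball_center]

lemma natCard_residueField_mul_measure_ball [Finite 𝓀[K]] :
    Nat.card 𝓀[K] * μ (Metric.ball 0 1) = μ {x : K | ‖x‖ ≤ 1} := by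
  have := Fintype.ofFinite 𝓀[K]
  rw [← iUnion_residueClass,
    measure_iUnion pairwise_disjoint_residueClass measurableSet_residueClass, tsum_fintype]
  simp [measure_residueClass, Nat.card_eq_fintype_card]

end Measure

section Matrix

variable {K : Type*} [NormedField K] [IsUltrametricDist K] {m n : Type*}

def residueCell (r : Matrix m n 𝓀[K]) : Set (Matrix m n K) :=
  Set.univ.pi fun i => Set.univ.pi fun j => residueClass (r i j)

lemma mem_residueCell_iff {r : Matrix m n 𝓀[K]} {g : Matrix m n K} :
    g ∈ residueCell r ↔ ∃ G : Matrix m n 𝒪[K], G.map (↑) = g ∧ G.map (residue 𝒪[K]) = r := by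
  change (∀ i ∈ Set.univ, ∀ j ∈ Set.univ, g i j ∈ residueClass (r i j)) ↔ _
  simp only [Set.mem_univ, true_implies, residueClass, Set.mem_image, Set.mem_preimage,
    Set.mem_singleton_iff]
  constructor
  · intro h
    choose G hGr hGg using h
    exact ⟨G, Matrix.ext hGg, Matrix.ext hGr⟩
  · rintro ⟨G, rfl, rfl⟩ i j
    exact ⟨G i j, rfl, rfl⟩

lemma pairwise_disjoint_residueCell :
    Pairwise (Disjoint on residueCell (K := K) (m := m) (n := n)) := by
  intro r s hrs
  obtain ⟨i, j, hij⟩ : ∃ i j, r i j ≠ s i j := by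
    by_contra! h
    exact hrs (Matrix.ext h)
  exact Set.disjoint_univ_pi.mpr
    ⟨i, Set.disjoint_univ_pi.mpr ⟨j, pairwise_disjoint_residueClass hij⟩⟩

lemma isUnit_map_residue_iff {R : Type*} [CommRing R] [IsLocalRing R] [Fintype n] [DecidableEq n]
    (A : Matrix n n R) : IsUnit (A.map (residue R)) ↔ IsUnit A := by
  rw [Matrix.isUnit_iff_isUnit_det, Matrix.isUnit_iff_isUnit_det, ← RingHom.mapMatrix_apply,
    ← RingHom.map_det, isUnit_map_iff]

lemma mem_GLO_iff {d : ℕ} {g : Matrix (Fin d) (Fin d) K} :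
    g ∈ GLO d ↔ ∃ G : Matrix (Fin d) (Fin d) 𝒪[K], IsUnit G ∧ G.map (↑) = g := by
  let ι := (𝒪[K]).subtype.mapMatrix (m := Fin d)
  have hι : Injective ι := fun A B hAB => Matrix.ext fun i j =>
    Subtype.ext (congrFun (congrFun hAB i) j)
  constructor
  · rintro ⟨hg, h, hh, hgh, hhg⟩
    let G : Matrix (Fin d) (Fin d) 𝒪[K] :=
      .of fun i j => ⟨g i j, mem_integer_iff_norm_le_one.mpr (hg i j)⟩
    let H : Matrix (Fin d) (Fin d) 𝒪[K] :=
      .of fun i j => ⟨h i j, mem_integer_iff_norm_le_one.mpr (hh i j)⟩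
    have hGH : G * H = 1 := hι (by rw [map_mul, map_one]; exact hgh)
    have hHG : H * G = 1 := hι (by rw [map_mul, map_one]; exact hhg)
    exact ⟨G, ⟨⟨G, H, hGH, hHG⟩, rfl⟩, rfl⟩
  · rintro ⟨_, ⟨u, rfl⟩, rfl⟩
    refine ⟨fun i j => norm_coe_integer_le_one _, ι ↑u⁻¹, fun i j => norm_coe_integer_le_one _,
      ?_, ?_⟩
    · change ι _ * ι _ = 1
      rw [← map_mul, u.mul_inv, map_one]
    · change ι _ * ι _ = 1
      rw [← map_mul, u.inv_mul, map_one]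

lemma GLO_eq_iUnion_residueCell {d : ℕ} :
    GLO d = ⋃ r : GL (Fin d) 𝓀[K], residueCell (r : Matrix (Fin d) (Fin d) 𝓀[K]) := by
  ext g
  simp only [Set.mem_iUnion, mem_GLO_iff, mem_residueCell_iff]
  constructor
  · rintro ⟨G, hG, rfl⟩
    exact ⟨((isUnit_map_residue_iff G).mpr hG).unit, G, rfl, rfl⟩
  · rintro ⟨r, G, rfl, hGr⟩
    exact ⟨G, (isUnit_map_residue_iff G).mp (hGr ▸ r.isUnit), rfl⟩

variable [Fintype m] [Fintype n] [MeasurableSpace K] [BorelSpace K]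

lemma measurableSet_residueCell (r : Matrix m n 𝓀[K]) : MeasurableSet (residueCell r) :=
  .univ_pi fun i => .univ_pi fun j => measurableSet_residueClass (r i j)

lemma measure_pi_residueCell (μ : Measure K) [μ.IsAddHaarMeasure] [SigmaFinite μ]
    (r : Matrix m n 𝓀[K]) :
    (Measure.pi fun _ : m => Measure.pi fun _ : n => μ : Measure (Matrix m n K)) (residueCell r)
      = μ (Metric.ball 0 1) ^ (Fintype.card m * Fintype.card n) := by
  simp only [residueCell, Measure.pi_pi, measure_residueClass, Finset.prod_const,
    Finset.card_univ, pow_mul']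

end Matrix

open scoped ENNReal

lemma ENNReal.pow_sub_pow_mul_inv_pow {a : ℝ≥0∞} (ha₀ : a ≠ 0) (ha : a ≠ ⊤) {i n : ℕ}
    (hin : i ≤ n) :
    (a ^ n - a ^ i) * a⁻¹ ^ n = 1 - a⁻¹ ^ (n - i) := by
  have hinv : a⁻¹ ^ n = a⁻¹ ^ i * a⁻¹ ^ (n - i) := by rw [← pow_add, Nat.add_sub_cancel' hin]
  rw [ENNReal.sub_mul fun _ _ => ENNReal.pow_ne_top (ENNReal.inv_ne_top.mpr ha₀), ← mul_pow,
    ENNReal.mul_inv_cancel ha₀ ha, one_pow, hinv, ← mul_assoc, ← mul_pow,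
    ENNReal.mul_inv_cancel ha₀ ha, one_pow, one_mul]

lemma prod_pow_sub_pow_mul_inv_pow {q : ℕ} (hq : q ≠ 0) (n : ℕ) :
    ((∏ i : Fin n, (q ^ n - q ^ (i : ℕ)) : ℕ) : ℝ≥0∞) * (q : ℝ≥0∞)⁻¹ ^ (n * n)
      = ∏ j ∈ Finset.Icc 1 n, (1 - (q : ℝ≥0∞)⁻¹ ^ j) := by
  have hq₀ : (q : ℝ≥0∞) ≠ 0 := Nat.cast_ne_zero.mpr hq
  rw [pow_mul, ← Fin.prod_const n ((q : ℝ≥0∞)⁻¹ ^ n), Nat.cast_prod, ← Finset.prod_mul_distrib]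
  simp_rw [ENNReal.natCast_sub, Nat.cast_pow]
  rw [Finset.prod_congr rfl fun (i : Fin n) _ =>
    ENNReal.pow_sub_pow_mul_inv_pow hq₀ (ENNReal.natCast_ne_top q) i.isLt.le,
    Fin.prod_univ_eq_prod_range (fun i => 1 - (q : ℝ≥0∞)⁻¹ ^ (n - i))]
  refine Finset.prod_nbij' (n - ·) (n - ·) ?_ ?_ ?_ ?_ fun _ _ => rfl <;>
    intro i hi <;> simp only [Finset.mem_range, Finset.mem_Icc] at hi ⊢ <;> omega

theorem vol_GLO_general {F : Type*} [NormedField F] [IsUltrametricDist F]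
    [LocallyCompactSpace F] [MeasurableSpace F] [BorelSpace F]
    (q : ℕ) (hq : 1 < q) (ϖ : F) (hϖ : ‖ϖ‖ = (q : ℝ)⁻¹)
    (hres : ∃ C : Finset F, C.card = q ∧ (∀ c ∈ C, ‖c‖ ≤ 1) ∧
      ∀ x : F, ‖x‖ ≤ 1 → ∃! c, c ∈ C ∧ ‖x - c‖ < 1)
    (vol : Measure F) [Measure.IsAddHaarMeasure vol]
    (hvol : vol {x : F | ‖x‖ ≤ 1} = 1)
    (n : ℕ) :
    (Measure.pi fun _ : Fin n => Measure.pi fun _ : Fin n => vol :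
        Measure (Matrix (Fin n) (Fin n) F)) (GLO n)
      = ∏ j ∈ Finset.Icc 1 n, (1 - ((q : ENNReal))⁻¹ ^ j) := by
  obtain ⟨C, hCq, hC, hCres⟩ := hres
  have : SigmaFinite vol := sigmaFinite_of_one_lt_norm vol (a := ϖ⁻¹) (by
    rw [norm_inv, hϖ, inv_inv]
    exact_mod_cast hq)
  have hcard : Nat.card 𝓀[F] = q := (natCard_residueField_eq_card hC hCres).trans hCq
  have : Finite 𝓀[F] := Nat.finite_of_card_ne_zero (by omega)
  have := Fintype.ofFinite 𝓀[F]
  have hball : vol (Metric.ball 0 1) = (q : ℝ≥0∞)⁻¹ := by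
    refine ENNReal.eq_inv_of_mul_eq_one_left ?_
    rw [mul_comm, ← hcard, natCard_residueField_mul_measure_ball, hvol]
  have hcell : ∀ r : GL (Fin n) 𝓀[F],
      (Measure.pi fun _ : Fin n => Measure.pi fun _ : Fin n => vol)
        (residueCell (r : Matrix _ _ _)) = (q : ℝ≥0∞)⁻¹ ^ (n * n) := fun r => by
    rw [measure_pi_residueCell, hball, Fintype.card_fin]
  -- The statement's measure lives on `Fin n → Fin n → F`, not on `Matrix`, so `rw` cannot be used.
  refine ((congrArg _ GLO_eq_iUnion_residueCell).trans (measure_iUnion (α := Fin n → Fin n → F)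
    (pairwise_disjoint_residueCell.comp_of_injective Units.val_injective)
    fun r => measurableSet_residueCell _)).trans ?_
  rw [tsum_congr hcell, ENNReal.tsum_const, ENat.card_eq_coe_natCard, Matrix.card_GL_field,
    ← Nat.card_eq_fintype_card, hcard]
  exact prod_pow_sub_pow_mul_inv_pow (by omega) n

/-- With `vol` the additive Haar measure on `Mat(n,F)` (product of the
additive Haar measure of `F` normalized by `vol(O_F) = 1`, so that
`vol(Mat(n,O_F)) = 1`), one has `vol(GL(n,O_F)) = ∏_{j=1}^n (1 - q^{-j})`. -/
theorem vol_GLO {F : Type*} [NormedField F] [CompleteSpace F] [IsUltrametricDist F]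
    [LocallyCompactSpace F] [MeasurableSpace F] [BorelSpace F]
    (q : ℕ) (hq : 1 < q) (ϖ : F) (hϖ : ‖ϖ‖ = (q : ℝ)⁻¹)
    (hϖgen : ∀ x : F, ‖x‖ < 1 → ∃ c : F, ‖c‖ ≤ 1 ∧ x = ϖ * c)
    (hres : ∃ C : Finset F, C.card = q ∧ (∀ c ∈ C, ‖c‖ ≤ 1) ∧
      ∀ x : F, ‖x‖ ≤ 1 → ∃! c, c ∈ C ∧ ‖x - c‖ < 1)
    (vol : Measure F) [Measure.IsAddHaarMeasure vol]
    (hvol : vol {x : F | ‖x‖ ≤ 1} = 1)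
    (n : ℕ) (hn : 1 ≤ n) :
    (Measure.pi fun _ : Fin n => Measure.pi fun _ : Fin n => vol :
        Measure (Matrix (Fin n) (Fin n) F)) (GLO n)
      = ∏ j ∈ Finset.Icc 1 n, (1 - ((q : ENNReal))⁻¹ ^ j) :=
  vol_GLO_general q hq ϖ hϖ hres vol hvol n
end

section
/- Every n×n matrix A over F can be written as A = a·D·b where a, b ∈ GL(n,O_F) and D = diag(d_1, …, d_n) is a diagonal matrix in which each d_i is either 0 or an integer power of the uniformizer ϖ and |d_1| ≥ |d_2| ≥ … ≥ |d_n|. Moreover the tuple of absolute values (|d_1|, …, |d_n|) (equivalently, the nonincreasing tuple of singular numbers k_i ∈ ℤ∪{−∞} with |d_i| = q^{k_i}) is uniquely determined by A. -/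
section

variable {F : Type*} [NormedField F]

lemma exists_norm_eq_one_mul_zpow {ϖ : F} (hϖ₀ : ϖ ≠ 0) (hϖ₁ : ‖ϖ‖ < 1)
    (hϖgen : ∀ x : F, ‖x‖ < 1 → ∃ c : F, ‖c‖ ≤ 1 ∧ x = ϖ * c) {x : F} (hx : x ≠ 0) :
    ∃ (u : F) (k : ℤ), ‖u‖ = 1 ∧ x = u * ϖ ^ k := by
  set r := ‖ϖ‖⁻¹
  have hr : 1 < r := (one_lt_inv₀ (norm_pos_iff.mpr hϖ₀)).mpr hϖ₁
  obtain ⟨m, hlo, hhi⟩ := exists_mem_Ioc_zpow (norm_pos_iff.mpr hx) hr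
  have hpos : 0 < r ^ (m + 1) := zpow_pos (zero_lt_one.trans hr) _
  have hnorm : ‖x / ϖ ^ (-(m + 1))‖ = ‖x‖ / r ^ (m + 1) := by
    rw [norm_div, norm_zpow, zpow_neg, ← inv_zpow]
  -- `r ^ m < ‖x‖ ≤ r ^ (m + 1)`; were `x / ϖ ^ (-(m + 1))` in `ϖ O_F`, then `‖x‖ ≤ r ^ m`.
  refine ⟨x / ϖ ^ (-(m + 1)), -(m + 1), le_antisymm ?_ (not_lt.mp fun hlt => ?_), ?_⟩
  · rw [hnorm]
    exact div_le_one_of_le₀ hhi hpos.le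
  · obtain ⟨c, hc, hxc⟩ := hϖgen _ hlt
    have hle : ‖x‖ ≤ r ^ m := calc
      ‖x‖ = ‖x / ϖ ^ (-(m + 1))‖ * r ^ (m + 1) := by rw [hnorm, div_mul_cancel₀ _ hpos.ne']
      _ = ‖ϖ‖ * ‖c‖ * r ^ (m + 1) := by rw [hxc, norm_mul]
      _ ≤ ‖ϖ‖ * r ^ (m + 1) := by gcongr; exact mul_le_of_le_one_right (norm_nonneg _) hc
      _ = r ^ m := by
        rw [zpow_add_one₀ (zero_lt_one.trans hr).ne', mul_comm, mul_assoc,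
          inv_mul_cancel₀ (norm_ne_zero_iff.mpr hϖ₀), mul_one]
    exact (not_lt.mpr hle) hlo
  · rw [div_mul_cancel₀ _ (zpow_ne_zero _ hϖ₀)]

open Matrix
open scoped NNReal

section IntegralEntries

variable {l m n : Type*}

def HasIntegralEntries (g : Matrix m n F) : Prop := ∀ i j, ‖g i j‖ ≤ 1

lemma hasIntegralEntries_one [DecidableEq n] : HasIntegralEntries (1 : Matrix n n F) := by
  intro i j
  rw [one_apply]
  split_ifs <;> simp

lemma hasIntegralEntries_vecMulVec {v : m → F} {w : n → F} (hv : ∀ i, ‖v i‖ ≤ 1)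
    (hw : ∀ j, ‖w j‖ ≤ 1) : HasIntegralEntries (vecMulVec v w) := fun i j => by
  rw [vecMulVec_apply, norm_mul]
  exact mul_le_one₀ (hv i) (norm_nonneg _) (hw j)

variable [IsUltrametricDist F]

lemma HasIntegralEntries.add {g h : Matrix m n F} (hg : HasIntegralEntries g)
    (hh : HasIntegralEntries h) : HasIntegralEntries (g + h) := fun i j =>
  (IsUltrametricDist.norm_add_le_max _ _).trans (max_le (hg i j) (hh i j))

lemma HasIntegralEntries.mul [Fintype m] {g : Matrix l m F} {h : Matrix m n F}
    (hg : HasIntegralEntries g) (hh : HasIntegralEntries h) : HasIntegralEntries (g * h) :=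
  fun i j => IsUltrametricDist.norm_sum_le_of_forall_le_of_nonneg zero_le_one fun k _ => by
    rw [norm_mul]
    exact mul_le_one₀ (hg i k) (norm_nonneg _) (hh k j)

end IntegralEntries

section GLO

variable {n : ℕ}

lemma mem_GLO_of_mul_eq_one {g h : Matrix (Fin n) (Fin n) F} (hg : HasIntegralEntries g)
    (hh : HasIntegralEntries h) (hgh : g * h = 1) : g ∈ GLO n :=
  ⟨hg, h, hh, hgh, mul_eq_one_comm.mp hgh⟩

lemma one_mem_GLO : (1 : Matrix (Fin n) (Fin n) F) ∈ GLO n :=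
  mem_GLO_of_mul_eq_one hasIntegralEntries_one hasIntegralEntries_one (mul_one 1)

lemma mul_mem_GLO [IsUltrametricDist F] {g g' : Matrix (Fin n) (Fin n) F} (hg : g ∈ GLO n)
    (hg' : g' ∈ GLO n) : g * g' ∈ GLO n := by
  obtain ⟨hg, h, hh, hgh, -⟩ := hg
  obtain ⟨hg', h', hh', hgh', -⟩ := hg'
  refine mem_GLO_of_mul_eq_one (HasIntegralEntries.mul hg hg') (HasIntegralEntries.mul hh' hh) ?_
  rw [mul_assoc, ← mul_assoc g', hgh', one_mul, hgh]

lemma one_add_mem_GLO [IsUltrametricDist F] {N : Matrix (Fin n) (Fin n) F}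
    (hN : HasIntegralEntries N) (hNN : N * N = 0) : 1 + N ∈ GLO n := by
  have hN' : HasIntegralEntries (-N) := fun i j => by simpa using hN i j
  refine mem_GLO_of_mul_eq_one (hasIntegralEntries_one.add hN)
    (hasIntegralEntries_one.add hN') ?_
  rw [add_mul, one_mul, mul_add, mul_neg, hNN, mul_one]
  abel

lemma diagonal_mem_GLO {u : Fin n → F} (hu : ∀ i, ‖u i‖ = 1) : diagonal u ∈ GLO n := by
  have hint {v : Fin n → F} (hv : ∀ i, ‖v i‖ = 1) : HasIntegralEntries (diagonal v) :=
    fun i j => by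
      rw [diagonal_apply]
      split_ifs <;> simp [hv]
  refine mem_GLO_of_mul_eq_one (hint hu) (h := diagonal fun i => (u i)⁻¹)
    (hint fun i => by simp [hu]) ?_
  rw [diagonal_mul_diagonal, ← diagonal_one]
  exact congrArg diagonal (funext fun i => mul_inv_cancel₀ (norm_ne_zero_iff.mp (by simp [hu])))

lemma permMatrix_mem_GLO (σ : Equiv.Perm (Fin n)) : σ.permMatrix F ∈ GLO n := by
  have hint (τ : Equiv.Perm (Fin n)) : HasIntegralEntries (τ.permMatrix F) := fun i j => by
    rw [Equiv.Perm.permMatrix, PEquiv.toMatrix_apply]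
    split_ifs <;> simp
  refine mem_GLO_of_mul_eq_one (hint σ) (hint σ⁻¹) ?_
  rw [← Matrix.permMatrix_mul, inv_mul_cancel, Matrix.permMatrix_one]

def GLOEquivalent (A B : Matrix (Fin n) (Fin n) F) : Prop :=
  ∃ a b, a ∈ GLO n ∧ b ∈ GLO n ∧ A = a * B * b

namespace GLOEquivalent

variable {A B C : Matrix (Fin n) (Fin n) F}

lemma refl (A : Matrix (Fin n) (Fin n) F) : GLOEquivalent A A :=
  ⟨1, 1, one_mem_GLO, one_mem_GLO, by rw [one_mul, mul_one]⟩

lemma of_eq (h : A = B) : GLOEquivalent A B := h ▸ refl A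

lemma symm (h : GLOEquivalent A B) : GLOEquivalent B A := by
  obtain ⟨a, b, ⟨ha, a', ha', haa', ha'a⟩, ⟨hb, b', hb', hbb', hb'b⟩, rfl⟩ := h
  refine ⟨a', b', ⟨ha', a, ha, ha'a, haa'⟩, ⟨hb', b, hb, hb'b, hbb'⟩, ?_⟩
  calc B = (a' * a) * B * (b * b') := by rw [ha'a, hbb', one_mul, mul_one]
    _ = a' * (a * B * b) * b' := by noncomm_ring

lemma trans [IsUltrametricDist F] (h₁ : GLOEquivalent A B) (h₂ : GLOEquivalent B C) :
    GLOEquivalent A C := by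
  obtain ⟨a, b, ha, hb, rfl⟩ := h₁
  obtain ⟨a', b', ha', hb', rfl⟩ := h₂
  exact ⟨a * a', b' * b, mul_mem_GLO ha ha', mul_mem_GLO hb' hb, by noncomm_ring⟩

lemma submatrix (A : Matrix (Fin n) (Fin n) F) (σ τ : Equiv.Perm (Fin n)) :
    GLOEquivalent (A.submatrix σ τ) A := by
  refine ⟨σ.permMatrix F, τ⁻¹.permMatrix F, permMatrix_mem_GLO σ, permMatrix_mem_GLO τ⁻¹, ?_⟩
  rw [Equiv.Perm.permMatrix, Equiv.Perm.permMatrix, PEquiv.toMatrix_toPEquiv_mul,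
    PEquiv.mul_toMatrix_toPEquiv, submatrix_submatrix]
  rfl

end GLOEquivalent

end GLO

section CornerBlock

variable {n : ℕ}

def cornerBlock (x : F) (S : Matrix (Fin n) (Fin n) F) : Matrix (Fin (n + 1)) (Fin (n + 1)) F :=
  Matrix.of fun i j => Fin.cases (Fin.cases x (fun _ => 0) j) (fun i' => Fin.cases 0 (S i') j) i

@[simp] lemma cornerBlock_zero_zero (x : F) (S : Matrix (Fin n) (Fin n) F) :
    cornerBlock x S 0 0 = x := rfl
@[simp] lemma cornerBlock_zero_succ (x : F) (S : Matrix (Fin n) (Fin n) F) (j : Fin n) :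
    cornerBlock x S 0 j.succ = 0 := rfl
@[simp] lemma cornerBlock_succ_zero (x : F) (S : Matrix (Fin n) (Fin n) F) (i : Fin n) :
    cornerBlock x S i.succ 0 = 0 := rfl
@[simp] lemma cornerBlock_succ_succ (x : F) (S : Matrix (Fin n) (Fin n) F) (i j : Fin n) :
    cornerBlock x S i.succ j.succ = S i j := rfl

lemma cornerBlock_mul_cornerBlock (x y : F) (S T : Matrix (Fin n) (Fin n) F) :
    cornerBlock x S * cornerBlock y T = cornerBlock (x * y) (S * T) := by
  ext i j
  rw [mul_apply, Fin.sum_univ_succ]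
  induction i using Fin.cases <;> induction j using Fin.cases <;> simp [mul_apply]

lemma cornerBlock_one : cornerBlock (1 : F) (1 : Matrix (Fin n) (Fin n) F) = 1 := by
  ext i j
  induction i using Fin.cases <;> induction j using Fin.cases <;>
    simp [one_apply, (Fin.succ_ne_zero _).symm]

lemma cornerBlock_diagonal (x : F) (d : Fin n → F) :
    cornerBlock x (diagonal d) = diagonal (Fin.cons x d) := by
  ext i j
  induction i using Fin.cases <;> induction j using Fin.cases <;>
    simp [diagonal_apply, (Fin.succ_ne_zero _).symm]

lemma cornerBlock_one_mem_GLO {g : Matrix (Fin n) (Fin n) F} (hg : g ∈ GLO n) :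
    cornerBlock 1 g ∈ GLO (n + 1) := by
  obtain ⟨hg, h, hh, hgh, -⟩ := hg
  have hint {S : Matrix (Fin n) (Fin n) F} (hS : HasIntegralEntries S) :
      HasIntegralEntries (cornerBlock 1 S) := fun i j => by
    induction i using Fin.cases <;> induction j using Fin.cases <;> simp [hS _ _]
  refine mem_GLO_of_mul_eq_one (hint hg) (hint hh) ?_
  rw [cornerBlock_mul_cornerBlock, hgh, one_mul, cornerBlock_one]

lemma GLOEquivalent.cornerBlock_cornerBlock [IsUltrametricDist F] (x : F)
    {S T : Matrix (Fin n) (Fin n) F} (h : GLOEquivalent S T) :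
    GLOEquivalent (cornerBlock x S) (cornerBlock x T) := by
  obtain ⟨a, b, ha, hb, rfl⟩ := h
  refine ⟨cornerBlock 1 a, cornerBlock 1 b, cornerBlock_one_mem_GLO ha,
    cornerBlock_one_mem_GLO hb, ?_⟩
  rw [cornerBlock_mul_cornerBlock, cornerBlock_mul_cornerBlock, one_mul, mul_one]

end CornerBlock

section Elimination

variable {n : ℕ}

def pivotComplement (B : Matrix (Fin (n + 1)) (Fin (n + 1)) F) : Matrix (Fin n) (Fin n) F :=
  Matrix.of fun i j => B i.succ j.succ - B i.succ 0 * B 0 j.succ / B 0 0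

lemma eq_mul_cornerBlock_pivotComplement_mul (B : Matrix (Fin (n + 1)) (Fin (n + 1)) F)
    (hp : B 0 0 ≠ 0) :
    B = (1 + vecMulVec (Fin.cons 0 fun i => B i.succ 0 / B 0 0) (Pi.single 0 1)) *
      cornerBlock (B 0 0) (pivotComplement B) *
      (1 + vecMulVec (Pi.single 0 1) (Fin.cons 0 fun j => B 0 j.succ / B 0 0)) := by
  ext i j
  induction i using Fin.cases <;> induction j using Fin.cases <;>
    simp [Matrix.add_mul, Matrix.mul_add, vecMulVec_mul, mul_vecMulVec, vecMulVec_apply,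
      pivotComplement, hp, mul_div_cancel₀, mul_div_assoc]

variable [IsUltrametricDist F]

lemma one_add_vecMulVec_single_mem_GLO {v : Fin n → F} {i : Fin n} (hvi : v i = 0)
    (hv : ∀ j, ‖v j‖ ≤ 1) : 1 + vecMulVec v (Pi.single i 1) ∈ GLO n := by
  refine one_add_mem_GLO (hasIntegralEntries_vecMulVec hv fun j => ?_) ?_
  · rw [Pi.single_apply]; split_ifs <;> simp
  · rw [vecMulVec_mul_vecMulVec, single_dotProduct, hvi, mul_zero, zero_smul]
    simp

lemma one_add_single_vecMulVec_mem_GLO {v : Fin n → F} {i : Fin n} (hvi : v i = 0)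
    (hv : ∀ j, ‖v j‖ ≤ 1) : 1 + vecMulVec (Pi.single i 1) v ∈ GLO n := by
  refine one_add_mem_GLO (hasIntegralEntries_vecMulVec (fun j => ?_) hv) ?_
  · rw [Pi.single_apply]; split_ifs <;> simp
  · rw [vecMulVec_mul_vecMulVec, dotProduct_single, hvi, zero_mul, zero_smul]
    simp

lemma GLOEquivalent.cornerBlock_pivotComplement {B : Matrix (Fin (n + 1)) (Fin (n + 1)) F}
    (hp : B 0 0 ≠ 0) (hmax : ∀ i j, ‖B i j‖ ≤ ‖B 0 0‖) :
    GLOEquivalent B (cornerBlock (B 0 0) (pivotComplement B)) := by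
  have hquot {x : F} (hx : ‖x‖ ≤ ‖B 0 0‖) : ‖x / B 0 0‖ ≤ 1 := by
    rw [norm_div]; exact div_le_one_of_le₀ hx (norm_nonneg _)
  have hcons (f : Fin n → F) (hf : ∀ i, ‖f i‖ ≤ 1) :
      ∀ i, ‖(Fin.cons 0 f : Fin (n + 1) → F) i‖ ≤ 1 :=
    Fin.cases (by simp) hf
  exact ⟨_, _, one_add_vecMulVec_single_mem_GLO rfl (hcons _ fun i => hquot (hmax _ _)),
    one_add_single_vecMulVec_mem_GLO rfl (hcons _ fun j => hquot (hmax _ _)),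
    eq_mul_cornerBlock_pivotComplement_mul B hp⟩

end Elimination

lemma exists_perm_norm_le_apply_zero {n : ℕ} (A : Matrix (Fin (n + 1)) (Fin (n + 1)) F) :
    ∃ σ τ : Equiv.Perm (Fin (n + 1)), ∀ i j, ‖A i j‖ ≤ ‖A (σ 0) (τ 0)‖ := by
  obtain ⟨⟨i₀, j₀⟩, hmax⟩ := Finite.exists_max fun p : Fin (n + 1) × Fin (n + 1) => ‖A p.1 p.2‖
  exact ⟨Equiv.swap 0 i₀, Equiv.swap 0 j₀, fun i j => by simpa using hmax (i, j)⟩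

theorem exists_GLOEquivalent_diagonal [IsUltrametricDist F] :
    ∀ {n : ℕ} (A : Matrix (Fin n) (Fin n) F), ∃ d, GLOEquivalent A (diagonal d)
  | 0, A => ⟨0, .of_eq (Subsingleton.elim _ _)⟩
  | n + 1, A => by
    obtain ⟨σ, τ, hmax⟩ := exists_perm_norm_le_apply_zero A
    set B := A.submatrix σ τ
    have hAB : GLOEquivalent A B := (GLOEquivalent.submatrix A σ τ).symm
    by_cases hp : B 0 0 = 0
    · refine ⟨0, hAB.trans (.of_eq ?_)⟩
      ext i j
      simpa [B, show A (σ 0) (τ 0) = 0 from hp] using hmax (σ i) (τ j)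
    · obtain ⟨d, hd⟩ := exists_GLOEquivalent_diagonal (pivotComplement B)
      refine ⟨Fin.cons (B 0 0) d, hAB.trans <|
        (GLOEquivalent.cornerBlock_pivotComplement hp fun i j => hmax _ _).trans ?_⟩
      rw [← cornerBlock_diagonal]
      exact hd.cornerBlock_cornerBlock _

section SortedDiagonal

variable {n : ℕ} {ϖ : F}

lemma exists_GLOEquivalent_diagonal_zpow (hϖ₀ : ϖ ≠ 0) (hϖ₁ : ‖ϖ‖ < 1)
    (hϖgen : ∀ x : F, ‖x‖ < 1 → ∃ c : F, ‖c‖ ≤ 1 ∧ x = ϖ * c) (d : Fin n → F) :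
    ∃ d' : Fin n → F, (∀ i, d' i = 0 ∨ ∃ k : ℤ, d' i = ϖ ^ k) ∧
      GLOEquivalent (diagonal d) (diagonal d') := by
  have hfactor (x : F) : ∃ u y : F, ‖u‖ = 1 ∧ (y = 0 ∨ ∃ k : ℤ, y = ϖ ^ k) ∧ x = u * y := by
    by_cases hx : x = 0
    · exact ⟨1, 0, norm_one, Or.inl rfl, by rw [hx, mul_zero]⟩
    · obtain ⟨u, k, hu, hxu⟩ := exists_norm_eq_one_mul_zpow hϖ₀ hϖ₁ hϖgen hx
      exact ⟨u, ϖ ^ k, hu, Or.inr ⟨k, rfl⟩, hxu⟩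
  choose u d' hu hd' hd using fun i => hfactor (d i)
  refine ⟨d', hd', diagonal u, 1, diagonal_mem_GLO hu, one_mem_GLO, ?_⟩
  rw [mul_one, diagonal_mul_diagonal]
  exact congrArg diagonal (funext hd)

lemma exists_perm_antitone_norm (d : Fin n → F) :
    ∃ σ : Equiv.Perm (Fin n), Antitone fun i => ‖d (σ i)‖ :=
  ⟨Tuple.sort fun i => -‖d i‖, fun _ _ hij => by
    simpa using Tuple.monotone_sort (fun i => -‖d i‖) hij⟩

theorem exists_GLOEquivalent_antitone_diagonal_zpow [IsUltrametricDist F] (hϖ₀ : ϖ ≠ 0)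
    (hϖ₁ : ‖ϖ‖ < 1) (hϖgen : ∀ x : F, ‖x‖ < 1 → ∃ c : F, ‖c‖ ≤ 1 ∧ x = ϖ * c)
    (A : Matrix (Fin n) (Fin n) F) :
    ∃ d : Fin n → F, (∀ i, d i = 0 ∨ ∃ k : ℤ, d i = ϖ ^ k) ∧ Antitone (fun i => ‖d i‖) ∧
      GLOEquivalent A (diagonal d) := by
  obtain ⟨d₀, hd₀⟩ := exists_GLOEquivalent_diagonal A
  obtain ⟨d, hd, hd₀d⟩ := exists_GLOEquivalent_diagonal_zpow hϖ₀ hϖ₁ hϖgen d₀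
  obtain ⟨σ, hσ⟩ := exists_perm_antitone_norm d
  refine ⟨d ∘ σ, fun i => hd (σ i), hσ, hd₀.trans (hd₀d.trans ?_)⟩
  rw [← submatrix_diagonal_equiv]
  exact (GLOEquivalent.submatrix _ σ σ).symm

end SortedDiagonal

lemma det_submatrix_mul {R : Type*} [CommRing R] {l m n : Type*} [Fintype m] {k : ℕ}
    (X : Matrix l m R) (Y : Matrix m n R) (r : Fin k → l) (c : Fin k → n) :
    ((X * Y).submatrix r c).det =
      ∑ f : Fin k → m, (∏ i, X (r i) (f i)) * (Y.submatrix f c).det := by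
  have hrows :
      (X * Y).submatrix r c = Matrix.of fun i => ∑ t, X (r i) t • fun j => Y t (c j) := by
    ext i j
    simp [mul_apply, Finset.sum_apply]
  have hsum := (detRowAlternating (n := Fin k) (R := R)).toMultilinearMap.map_sum
    fun i t => X (r i) t • fun j => Y t (c j)
  have hsmul (f : Fin k → m) :=
    (detRowAlternating (n := Fin k) (R := R)).toMultilinearMap.map_smul_univ
      (fun i => X (r i) (f i)) fun i j => Y (f i) (c j)
  simp only [AlternatingMap.coe_multilinearMap, smul_eq_mul] at hsum hsmul
  rw [hrows, det]
  exact hsum.trans (Finset.sum_congr rfl fun f _ => hsmul f)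

lemma HasIntegralEntries.norm_det_le_one [IsUltrametricDist F] {n : Type*} [Fintype n]
    [DecidableEq n] {g : Matrix n n F} (hg : HasIntegralEntries g) : ‖g.det‖ ≤ 1 := by
  rw [det_apply']
  refine IsUltrametricDist.norm_sum_le_of_forall_le_of_nonneg zero_le_one fun σ _ => ?_
  rw [norm_mul, norm_prod]
  exact mul_le_one₀ (IsUltrametricDist.norm_intCast_le_one F _) (by positivity)
    (Finset.prod_le_one (fun _ _ => norm_nonneg _) fun i _ => hg _ _)

section MaxMinorNorm

variable {l m n : Type*} [Fintype l] [Fintype m] [Fintype n] (k : ℕ)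

def maxMinorNorm (A : Matrix m n F) : ℝ≥0 :=
  Finset.univ.sup fun rc : (Fin k → m) × (Fin k → n) => ‖(A.submatrix rc.1 rc.2).det‖₊

lemma nnnorm_det_submatrix_le_maxMinorNorm (A : Matrix m n F) (r : Fin k → m) (c : Fin k → n) :
    ‖(A.submatrix r c).det‖₊ ≤ maxMinorNorm k A :=
  Finset.le_sup (f := fun rc : (Fin k → m) × (Fin k → n) => ‖(A.submatrix rc.1 rc.2).det‖₊)
    (Finset.mem_univ (r, c))

lemma maxMinorNorm_le_iff {A : Matrix m n F} {C : ℝ≥0} :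
    maxMinorNorm k A ≤ C ↔ ∀ (r : Fin k → m) (c : Fin k → n), ‖(A.submatrix r c).det‖₊ ≤ C := by
  simp [maxMinorNorm]

lemma maxMinorNorm_transpose_le (A : Matrix m n F) : maxMinorNorm k Aᵀ ≤ maxMinorNorm k A :=
  (maxMinorNorm_le_iff k).mpr fun r c => by
    rw [← transpose_submatrix, det_transpose]
    exact nnnorm_det_submatrix_le_maxMinorNorm k A c r

lemma maxMinorNorm_transpose (A : Matrix m n F) : maxMinorNorm k Aᵀ = maxMinorNorm k A :=
  le_antisymm (maxMinorNorm_transpose_le k A)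
    (transpose_transpose A ▸ maxMinorNorm_transpose_le k Aᵀ)

lemma maxMinorNorm_mul_le_of_left [IsUltrametricDist F] {g : Matrix l m F}
    (hg : HasIntegralEntries g) (A : Matrix m n F) : maxMinorNorm k (g * A) ≤ maxMinorNorm k A :=
  (maxMinorNorm_le_iff k).mpr fun r c => by
    rw [det_submatrix_mul]
    refine IsUltrametricDist.nnnorm_sum_le_of_forall_le fun f _ => ?_
    rw [nnnorm_mul, nnnorm_prod]
    exact mul_le_of_le_one_of_le (Finset.prod_le_one' fun i _ => hg _ _)
      (nnnorm_det_submatrix_le_maxMinorNorm k A f c)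

lemma maxMinorNorm_mul_le_of_right [IsUltrametricDist F] (A : Matrix l m F) {g : Matrix m n F}
    (hg : HasIntegralEntries g) : maxMinorNorm k (A * g) ≤ maxMinorNorm k A := by
  rw [← maxMinorNorm_transpose, transpose_mul, ← maxMinorNorm_transpose k A]
  exact maxMinorNorm_mul_le_of_left k (fun i j => hg j i) Aᵀ

end MaxMinorNorm

lemma GLOEquivalent.maxMinorNorm_eq [IsUltrametricDist F] {n : ℕ}
    {A B : Matrix (Fin n) (Fin n) F} (h : GLOEquivalent A B) (k : ℕ) :
    maxMinorNorm k A = maxMinorNorm k B := by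
  obtain ⟨a, b, ⟨ha, a', ha', -, ha'a⟩, ⟨hb, b', hb', hbb', -⟩, rfl⟩ := h
  refine le_antisymm ((maxMinorNorm_mul_le_of_right k _ hb).trans
    (maxMinorNorm_mul_le_of_left k ha B)) ?_
  calc maxMinorNorm k B = maxMinorNorm k (a' * (a * B * b) * b') := by
        rw [show a' * (a * B * b) * b' = (a' * a) * B * (b * b') by noncomm_ring, ha'a, hbb',
          one_mul, mul_one]
    _ ≤ maxMinorNorm k (a * B * b) :=
        (maxMinorNorm_mul_le_of_right k _ hb').trans (maxMinorNorm_mul_le_of_left k ha' _)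

lemma Finset.prod_le_prod_of_card_eq {ι M : Type*} [DecidableEq ι] [CommMonoid M]
    [LinearOrder M] [OrderBot M] [IsOrderedMonoid M] {s t : Finset ι} {f : ι → M}
    (hst : s.card = t.card) (h : ∀ a ∈ s \ t, ∀ b ∈ t \ s, f a ≤ f b) :
    ∏ a ∈ s, f a ≤ ∏ b ∈ t, f b := by
  rw [← Finset.prod_inter_mul_prod_sdiff s t, ← Finset.prod_inter_mul_prod_sdiff t s,
    Finset.inter_comm]
  refine mul_le_mul_right ?_ _
  calc ∏ a ∈ s \ t, f a ≤ (s \ t).sup f ^ (s \ t).card :=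
        Finset.prod_le_pow_card _ _ _ fun a ha => Finset.le_sup ha
    _ = (s \ t).sup f ^ (t \ s).card := by rw [Finset.card_sdiff_comm hst]
    _ ≤ ∏ b ∈ t \ s, f b :=
        Finset.pow_card_le_prod _ _ _ fun b hb => Finset.sup_le fun a ha => h a ha b hb

lemma prod_comp_le_prod_castLE {M : Type*} [CommMonoid M] [LinearOrder M] [OrderBot M]
    [IsOrderedMonoid M] {n k : ℕ} {f : Fin n → M} (hf : Antitone f) (hk : k ≤ n)
    {r : Fin k → Fin n} (hr : r.Injective) : ∏ i, f (r i) ≤ ∏ i, f (Fin.castLE hk i) := by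
  rw [← Finset.prod_image hr.injOn, ← Finset.prod_image (Fin.castLE_injective hk).injOn]
  refine Finset.prod_le_prod_of_card_eq (by simp [Finset.card_image_of_injective _ hr,
    Finset.card_image_of_injective _ (Fin.castLE_injective hk)]) fun a ha b hb => hf ?_
  simp only [Finset.mem_sdiff, Finset.mem_image, Finset.mem_univ, true_and, not_exists] at ha hb
  obtain ⟨⟨i, rfl⟩, -⟩ := hb
  by_contra! hlt
  exact ha.2 ⟨a, (Fin.lt_def.mp hlt).trans i.2⟩ rfl

lemma eq_of_antitone_of_prod_castLE_eq {n : ℕ} {f g : Fin n → ℝ≥0} (hf : Antitone f)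
    (hg : Antitone g)
    (h : ∀ k (hk : k ≤ n), ∏ i : Fin k, f (Fin.castLE hk i) = ∏ i : Fin k, g (Fin.castLE hk i)) :
    f = g := by
  suffices key : ∀ k (hk : k ≤ n) (i : Fin k), f (Fin.castLE hk i) = g (Fin.castLE hk i) from
    funext fun i => key n le_rfl i
  intro k
  induction k with
  | zero => exact fun _ i => i.elim0
  | succ k ih =>
    intro hk i
    have ih' : ∀ i : Fin k, f (Fin.castLE hk i.castSucc) = g (Fin.castLE hk i.castSucc) :=
      ih (Nat.le_of_succ_le hk)
    induction i using Fin.lastCases with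
    | cast i => exact ih' i
    | last =>
      have hprod := h (k + 1) hk
      rw [Fin.prod_univ_castSucc, Fin.prod_univ_castSucc, Finset.prod_congr rfl fun i _ => ih' i]
        at hprod
      -- a vanishing earlier factor forces both values to vanish, by antitonicity
      by_cases hzero : ∏ i : Fin k, g (Fin.castLE hk i.castSucc) = 0
      · obtain ⟨j, -, hj⟩ := Finset.prod_eq_zero_iff.mp hzero
        have hle : Fin.castLE hk j.castSucc ≤ Fin.castLE hk (Fin.last k) :=
          (Fin.castLE_le_castLE_iff hk).mpr (Fin.le_last _)
        rw [le_zero_iff.mp ((hf hle).trans_eq ((ih' j).trans hj)),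
          le_zero_iff.mp ((hg hle).trans_eq hj)]
      · exact mul_left_cancel₀ hzero hprod

lemma maxMinorNorm_diagonal [IsUltrametricDist F] {n k : ℕ} {d : Fin n → F}
    (hd : Antitone fun i => ‖d i‖) (hk : k ≤ n) :
    maxMinorNorm k (diagonal d) = ∏ i : Fin k, ‖d (Fin.castLE hk i)‖₊ := by
  refine le_antisymm ((maxMinorNorm_le_iff k).mpr fun r c => ?_) ?_
  · by_cases hr : r.Injective
    · have hfac : (diagonal d).submatrix r c =
          diagonal (d ∘ r) * (1 : Matrix (Fin n) (Fin n) F).submatrix r c := by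
        ext i j
        simp [diagonal_apply, one_apply]
      rw [hfac, det_mul, det_diagonal, nnnorm_mul, nnnorm_prod]
      exact mul_le_of_le_of_le_one (prod_comp_le_prod_castLE (f := fun i => ‖d i‖₊) hd hk hr)
        (HasIntegralEntries.norm_det_le_one fun i j => hasIntegralEntries_one _ _)
    · obtain ⟨i, j, hij, hne⟩ := Function.not_injective_iff.mp hr
      rw [det_zero_of_row_eq hne (by ext; simp [hij]), nnnorm_zero]
      exact zero_le
  · calc ∏ i : Fin k, ‖d (Fin.castLE hk i)‖₊
        = ‖((diagonal d).submatrix (Fin.castLE hk) (Fin.castLE hk)).det‖₊ := by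
          rw [submatrix_diagonal _ _ (Fin.castLE_injective hk), det_diagonal, nnnorm_prod]
          rfl
      _ ≤ maxMinorNorm k (diagonal d) := nnnorm_det_submatrix_le_maxMinorNorm k _ _ _

theorem norm_eq_of_GLOEquivalent_diagonal [IsUltrametricDist F] {n : ℕ} {d d' : Fin n → F}
    (hd : Antitone fun i => ‖d i‖) (hd' : Antitone fun i => ‖d' i‖)
    (h : GLOEquivalent (diagonal d) (diagonal d')) (i : Fin n) : ‖d i‖ = ‖d' i‖ := by
  have hnnnorm : (fun i => ‖d i‖₊) = fun i => ‖d' i‖₊ :=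
    eq_of_antitone_of_prod_castLE_eq (fun _ _ hij => hd hij) (fun _ _ hij => hd' hij)
      fun k hk => by
        rw [← maxMinorNorm_diagonal hd hk, ← maxMinorNorm_diagonal hd' hk, h.maxMinorNorm_eq]
  exact congrArg NNReal.toReal (congrFun hnnnorm i)

end

theorem smith_normal_form_general {F : Type*} [NormedField F] [IsUltrametricDist F]
    (q : ℕ) (hq : 1 < q) (ϖ : F) (hϖ : ‖ϖ‖ = (q : ℝ)⁻¹)
    (hϖgen : ∀ x : F, ‖x‖ < 1 → ∃ c : F, ‖c‖ ≤ 1 ∧ x = ϖ * c)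
    (n : ℕ) (A : Matrix (Fin n) (Fin n) F) :
    (∃ a b : Matrix (Fin n) (Fin n) F, a ∈ GLO n ∧ b ∈ GLO n ∧
      ∃ d : Fin n → F,
        (∀ i, d i = 0 ∨ ∃ k : ℤ, d i = ϖ ^ k) ∧
        (∀ i j : Fin n, i ≤ j → ‖d j‖ ≤ ‖d i‖) ∧
        A = a * Matrix.diagonal d * b)
    ∧
    (∀ (a b a' b' : Matrix (Fin n) (Fin n) F) (d d' : Fin n → F),
      a ∈ GLO n → b ∈ GLO n → a' ∈ GLO n → b' ∈ GLO n →
      (∀ i, d i = 0 ∨ ∃ k : ℤ, d i = ϖ ^ k) →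
      (∀ i j : Fin n, i ≤ j → ‖d j‖ ≤ ‖d i‖) →
      (∀ i, d' i = 0 ∨ ∃ k : ℤ, d' i = ϖ ^ k) →
      (∀ i j : Fin n, i ≤ j → ‖d' j‖ ≤ ‖d' i‖) →
      A = a * Matrix.diagonal d * b → A = a' * Matrix.diagonal d' * b' →
      ∀ i, ‖d i‖ = ‖d' i‖) := by
  have hq' : (1 : ℝ) < q := by exact_mod_cast hq
  have hϖ₁ : ‖ϖ‖ < 1 := hϖ ▸ inv_lt_one_of_one_lt₀ hq'
  have hϖ₀ : ϖ ≠ 0 := norm_pos_iff.mp (hϖ ▸ inv_pos.mpr (zero_lt_one.trans hq'))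
  refine ⟨?_, fun a b a' b' d d' ha hb ha' hb' _ hd _ hd' hA hA' =>
    norm_eq_of_GLOEquivalent_diagonal hd hd' ((GLOEquivalent.symm ⟨a, b, ha, hb, hA⟩).trans
      ⟨a', b', ha', hb', hA'⟩)⟩
  obtain ⟨d, hd, hanti, a, b, ha, hb, hA⟩ :=
    exists_GLOEquivalent_antitone_diagonal_zpow hϖ₀ hϖ₁ hϖgen A
  exact ⟨a, b, ha, hb, d, hd, hanti, hA⟩

/-- Smith normal form over `O_F`, with uniqueness of singular numbers:
every `n × n` matrix `A` over `F` can be written as `A = a · diag(d) · b` with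
`a, b ∈ GL(n, O_F)`, each `d i` equal to `0` or an integer power of the uniformizer `ϖ`,
and `‖d 1‖ ≥ ‖d 2‖ ≥ …`; moreover the tuple `(‖d i‖)_i` is uniquely determined by `A`. -/
theorem smith_normal_form {F : Type*} [NormedField F] [CompleteSpace F]
    [IsUltrametricDist F] [LocallyCompactSpace F]
    (q : ℕ) (hq : 1 < q) (ϖ : F) (hϖ : ‖ϖ‖ = (q : ℝ)⁻¹)
    (hϖgen : ∀ x : F, ‖x‖ < 1 → ∃ c : F, ‖c‖ ≤ 1 ∧ x = ϖ * c)
    (hres : ∃ C : Finset F, C.card = q ∧ (∀ c ∈ C, ‖c‖ ≤ 1) ∧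
      ∀ x : F, ‖x‖ ≤ 1 → ∃! c, c ∈ C ∧ ‖x - c‖ < 1)
    (n : ℕ) (A : Matrix (Fin n) (Fin n) F) :
    (∃ a b : Matrix (Fin n) (Fin n) F, a ∈ GLO n ∧ b ∈ GLO n ∧
      ∃ d : Fin n → F,
        (∀ i, d i = 0 ∨ ∃ k : ℤ, d i = ϖ ^ k) ∧
        (∀ i j : Fin n, i ≤ j → ‖d j‖ ≤ ‖d i‖) ∧
        A = a * Matrix.diagonal d * b)
    ∧
    (∀ (a b a' b' : Matrix (Fin n) (Fin n) F) (d d' : Fin n → F),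
      a ∈ GLO n → b ∈ GLO n → a' ∈ GLO n → b' ∈ GLO n →
      (∀ i, d i = 0 ∨ ∃ k : ℤ, d i = ϖ ^ k) →
      (∀ i j : Fin n, i ≤ j → ‖d j‖ ≤ ‖d i‖) →
      (∀ i, d' i = 0 ∨ ∃ k : ℤ, d' i = ϖ ^ k) →
      (∀ i j : Fin n, i ≤ j → ‖d' j‖ ≤ ‖d' i‖) →
      A = a * Matrix.diagonal d * b → A = a' * Matrix.diagonal d' * b' →
      ∀ i, ‖d i‖ = ‖d' i‖) :=
  smith_normal_form_general q hq ϖ hϖ hϖgen n A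
end

section
/- Define Θ : F → ℂ by Θ(x) := ∫_{O_F × O_F} χ(z₁ z₂ x) dvol(z₁) dvol(z₂). Then Θ(x) = 1 whenever |x| ≤ 1, and Θ(x) = q^{-ℓ} whenever |x| = q^{ℓ} with ℓ ≥ 1; equivalently, Θ(x) = q^{-ℓ·1_{ℓ≥1}} whenever |x| = q^{ℓ}, ℓ ∈ ℤ. -/
/-!
The inner integral `∫_{‖z₂‖ ≤ 1} χ(z₂ y)` is `1` when `‖y‖ ≤ 1`, since `χ` is trivial on `O_F`,
and `0` otherwise: then `‖y‖ ≥ q`, so some `z₀ ∈ O_F` has `χ(z₀ y) ≠ 1`, and translating by `z₀`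
multiplies the integral by `χ(z₀ y)`. Hence `Θ(x)` is the volume of `{z ∈ O_F | ‖z x‖ ≤ 1}`,
which is `O_F` when `‖x‖ ≤ 1` and the ball of radius `q^{-ℓ}` when `‖x‖ = q^ℓ`. That ball has
volume `q^{-ℓ}` because a ball of radius `‖a‖` is the disjoint union of the `q` balls of radius
`‖a‖ q⁻¹` centred at `a c`, `c` running over the residue representatives.
-/

open MeasureTheory Metric
open scoped ENNReal

theorem integral_eq_zero_of_add_right_eq_smul {G E : Type*} [AddGroup G] [MeasurableSpace G]
    [MeasurableAdd G] [NormedAddCommGroup E] [NormedSpace ℂ E] {μ : Measure G}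
    [μ.IsAddRightInvariant] {f : G → E} {g : G} {c : ℂ} (hc : c ≠ 1)
    (hf : ∀ x, f (x + g) = c • f x) : ∫ x, f x ∂μ = 0 := by
  have h : c • ∫ x, f x ∂μ = ∫ x, f x ∂μ := by
    simp_rw [← integral_smul, ← hf, integral_add_right_eq_self]
  have : (c - 1) • ∫ x, f x ∂μ = 0 := by rw [sub_smul, one_smul, h, sub_self]
  exact (smul_eq_zero.mp this).resolve_left (sub_ne_zero.mpr hc)

section LocalField

variable {F : Type*} [NormedField F] {q : ℕ}

theorem norm_le_inv_of_norm_lt_one {ϖ : F} (hϖ : ‖ϖ‖ = (q : ℝ)⁻¹)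
    (hϖgen : ∀ x : F, ‖x‖ < 1 → ∃ c : F, ‖c‖ ≤ 1 ∧ x = ϖ * c) {x : F} (hx : ‖x‖ < 1) :
    ‖x‖ ≤ (q : ℝ)⁻¹ := by
  obtain ⟨c, hc, rfl⟩ := hϖgen x hx
  rw [norm_mul, hϖ]
  exact mul_le_of_le_one_right (by positivity) hc

theorem le_norm_of_one_lt_norm (hgap : ∀ x : F, ‖x‖ < 1 → ‖x‖ ≤ (q : ℝ)⁻¹) {y : F}
    (hy : 1 < ‖y‖) : (q : ℝ) ≤ ‖y‖ := by
  have hy₀ : 0 < ‖y‖ := one_pos.trans hy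
  have h : ‖y‖⁻¹ ≤ (q : ℝ)⁻¹ := by
    simpa using hgap y⁻¹ (by simpa using inv_lt_one_of_one_lt₀ hy)
  exact (inv_le_inv₀ hy₀ (inv_pos.mp ((inv_pos.mpr hy₀).trans_le h))).mp h

variable [IsUltrametricDist F] [MeasurableSpace F] [BorelSpace F]

theorem setIntegral_unitBall_eq_zero (hgap : ∀ x : F, ‖x‖ < 1 → ‖x‖ ≤ (q : ℝ)⁻¹)
    (vol : Measure F) [vol.IsAddHaarMeasure] {χ : F → ℂ}
    (hχadd : ∀ x y : F, χ (x + y) = χ x * χ y) (hχnontriv : ∃ x : F, ‖x‖ ≤ (q : ℝ) ∧ χ x ≠ 1)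
    {y : F} (hy : 1 < ‖y‖) :
    ∫ z in {z : F | ‖z‖ ≤ 1}, χ (z * y) ∂vol = 0 := by
  obtain ⟨x₀, hx₀, hχx₀⟩ := hχnontriv
  have hy₀ : y ≠ 0 := norm_pos_iff.mp (one_pos.trans hy)
  set O : Set F := {z : F | ‖z‖ ≤ 1}
  have hO : MeasurableSet O := (isClosed_le continuous_norm continuous_const).measurableSet
  have hz₀ : ‖x₀ * y⁻¹‖ ≤ 1 := by
    rw [norm_mul, norm_inv, ← div_eq_mul_inv, div_le_one₀ (norm_pos_iff.mpr hy₀)]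
    exact hx₀.trans (le_norm_of_one_lt_norm hgap hy)
  have hmem : ∀ z : F, ‖z + x₀ * y⁻¹‖ ≤ 1 ↔ ‖z‖ ≤ 1 := by
    intro z
    constructor <;> intro hz
    · simpa using (IsUltrametricDist.norm_add_le_max _ _).trans
        (max_le hz (by rwa [norm_neg] : ‖-(x₀ * y⁻¹)‖ ≤ 1))
    · exact (IsUltrametricDist.norm_add_le_max _ _).trans (max_le hz hz₀)
  rw [← integral_indicator hO]
  refine integral_eq_zero_of_add_right_eq_smul (g := x₀ * y⁻¹) hχx₀ fun z => ?_
  by_cases hz : ‖z‖ ≤ 1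
  · rw [Set.indicator_of_mem (s := O) ((hmem z).mpr hz), Set.indicator_of_mem (s := O) hz,
      smul_eq_mul, add_mul, hχadd, inv_mul_cancel_right₀ hy₀, mul_comm]
  · rw [Set.indicator_of_notMem (s := O) (mt (hmem z).mp hz),
      Set.indicator_of_notMem (s := O) hz, smul_zero]

theorem measure_closedBall_norm_eq_mul (hq : 1 < q)
    (hgap : ∀ x : F, ‖x‖ < 1 → ‖x‖ ≤ (q : ℝ)⁻¹)
    (hres : ∃ C : Finset F, C.card = q ∧ (∀ c ∈ C, ‖c‖ ≤ 1) ∧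
      ∀ x : F, ‖x‖ ≤ 1 → ∃! c, c ∈ C ∧ ‖x - c‖ < 1)
    (vol : Measure F) [vol.IsAddHaarMeasure] {a : F} (ha : a ≠ 0) :
    vol (closedBall 0 ‖a‖) = q * vol (closedBall 0 (‖a‖ * (q : ℝ)⁻¹)) := by
  obtain ⟨C, hCcard, hCnorm, hCuniq⟩ := hres
  set r := ‖a‖ * (q : ℝ)⁻¹
  have hq_inv_lt_one : (q : ℝ)⁻¹ < 1 := inv_lt_one_of_one_lt₀ (by exact_mod_cast hq)
  have hsep : ∀ c ∈ C, ∀ c' ∈ C, ‖c - c'‖ < 1 → c = c' := fun c hc c' hc' h =>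
    (hCuniq c (hCnorm c hc)).unique ⟨hc, by simp⟩ ⟨hc', h⟩
  have hcover : closedBall 0 ‖a‖ = ⋃ c ∈ C, closedBall (a * c) r := by
    ext z
    simp only [mem_closedBall, dist_eq_norm, sub_zero, Set.mem_iUnion, exists_prop]
    constructor
    · intro hz
      obtain ⟨c, ⟨hc, hzc⟩, -⟩ :=
        hCuniq (z / a) (by rw [norm_div]; exact div_le_one_of_le₀ hz (norm_nonneg _))
      refine ⟨c, hc, ?_⟩
      rw [show z - a * c = a * (z / a - c) by field_simp, norm_mul]
      exact mul_le_mul_of_nonneg_left (hgap _ hzc) (norm_nonneg _)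
    · rintro ⟨c, hc, hzc⟩
      calc ‖z‖ = ‖(z - a * c) + a * c‖ := by rw [sub_add_cancel]
        _ ≤ max ‖z - a * c‖ ‖a * c‖ := IsUltrametricDist.norm_add_le_max _ _
        _ ≤ ‖a‖ := max_le (hzc.trans (mul_le_of_le_one_right (norm_nonneg _) hq_inv_lt_one.le))
            (by rw [norm_mul]; exact mul_le_of_le_one_right (norm_nonneg _) (hCnorm c hc))
  have hdisj : (C : Set F).PairwiseDisjoint fun c => closedBall (a * c) r := by
    intro c hc c' hc' hne
    refine Set.disjoint_left.mpr fun z hz hz' => hne (hsep c hc c' hc' ?_)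
    have hdist : ‖a‖ * ‖c - c'‖ ≤ ‖a‖ * (q : ℝ)⁻¹ := by
      rw [← norm_mul, mul_sub, ← dist_eq_norm]
      exact (IsUltrametricDist.dist_triangle_max _ z _).trans (max_le (by rwa [dist_comm]) hz')
    exact (le_of_mul_le_mul_left hdist (norm_pos_iff.mpr ha)).trans_lt hq_inv_lt_one
  rw [hcover, measure_biUnion_finset hdisj fun c _ => measurableSet_closedBall]
  simp only [Measure.addHaar_closedBall_center, Finset.sum_const, hCcard, nsmul_eq_mul]

theorem measure_closedBall_inv_pow (hq : 1 < q) {ϖ : F} (hϖ : ‖ϖ‖ = (q : ℝ)⁻¹)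
    (hϖgen : ∀ x : F, ‖x‖ < 1 → ∃ c : F, ‖c‖ ≤ 1 ∧ x = ϖ * c)
    (hres : ∃ C : Finset F, C.card = q ∧ (∀ c ∈ C, ‖c‖ ≤ 1) ∧
      ∀ x : F, ‖x‖ ≤ 1 → ∃! c, c ∈ C ∧ ‖x - c‖ < 1)
    (vol : Measure F) [vol.IsAddHaarMeasure] (hvol : vol (closedBall 0 1) = 1) (n : ℕ) :
    vol (closedBall (0 : F) ((q : ℝ)⁻¹ ^ n)) = (q : ℝ≥0∞)⁻¹ ^ n := by
  induction n with
  | zero => simpa using hvol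
  | succ n ih =>
    have hϖn : ‖ϖ ^ n‖ = (q : ℝ)⁻¹ ^ n := by rw [norm_pow, hϖ]
    have hq₀ : (0 : ℝ) < q := Nat.cast_pos.mpr (by omega)
    have hϖn₀ : ϖ ^ n ≠ 0 := norm_pos_iff.mp (by rw [hϖn]; positivity)
    have h := measure_closedBall_norm_eq_mul hq
      (fun x => norm_le_inv_of_norm_lt_one hϖ hϖgen) hres vol hϖn₀
    rw [hϖn, ih, ← pow_succ] at h
    rw [pow_succ' (q : ℝ≥0∞)⁻¹, h, ← mul_assoc,
      ENNReal.inv_mul_cancel (by positivity) (ENNReal.natCast_ne_top q), one_mul]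

theorem theta_eq_measureReal (hgap : ∀ x : F, ‖x‖ < 1 → ‖x‖ ≤ (q : ℝ)⁻¹)
    (vol : Measure F) [vol.IsAddHaarMeasure] (hvol : vol {z : F | ‖z‖ ≤ 1} = 1)
    {χ : F → ℂ} (hχadd : ∀ x y : F, χ (x + y) = χ x * χ y)
    (hχtriv : ∀ x : F, ‖x‖ ≤ 1 → χ x = 1) (hχnontriv : ∃ x : F, ‖x‖ ≤ (q : ℝ) ∧ χ x ≠ 1)
    (x : F) :
    ∫ z₁ in {z : F | ‖z‖ ≤ 1}, ∫ z₂ in {z : F | ‖z‖ ≤ 1}, χ (z₁ * z₂ * x) ∂vol ∂vol =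
      (vol.real ({z : F | ‖z‖ ≤ 1} ∩ {z | ‖z * x‖ ≤ 1}) : ℂ) := by
  set O : Set F := {z : F | ‖z‖ ≤ 1}
  set T : Set F := {z : F | ‖z * x‖ ≤ 1}
  have hO : MeasurableSet O := (isClosed_le continuous_norm continuous_const).measurableSet
  have hT : MeasurableSet T :=
    (isClosed_le (continuous_norm.comp (continuous_mul_const x)) continuous_const).measurableSet
  have hinner : ∀ z₁, ∫ z₂ in O, χ (z₁ * z₂ * x) ∂vol = T.indicator (fun _ => 1) z₁ := by
    intro z₁
    simp_rw [show ∀ z₂, z₁ * z₂ * x = z₂ * (z₁ * x) from fun z₂ => by ring]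
    by_cases h : ‖z₁ * x‖ ≤ 1
    · rw [Set.indicator_of_mem (s := T) h, setIntegral_congr_fun hO (g := fun _ => 1)
        fun z hz => hχtriv _ (by rw [norm_mul]; exact mul_le_one₀ hz (norm_nonneg _) h)]
      simp [measureReal_def, hvol]
    · rw [Set.indicator_of_notMem (s := T) h,
        setIntegral_unitBall_eq_zero hgap vol hχadd hχnontriv (not_le.mp h)]
  simp_rw [hinner]
  rw [integral_indicator_const 1 hT, measureReal_restrict_apply hT, Set.inter_comm,
    Complex.real_smul, mul_one]

end LocalField

theorem Theta_formula_general {F : Type*} [NormedField F]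
    [IsUltrametricDist F] [MeasurableSpace F] [BorelSpace F]
    (q : ℕ) (hq : 1 < q) (ϖ : F) (hϖ : ‖ϖ‖ = (q : ℝ)⁻¹)
    (hϖgen : ∀ x : F, ‖x‖ < 1 → ∃ c : F, ‖c‖ ≤ 1 ∧ x = ϖ * c)
    (hres : ∃ C : Finset F, C.card = q ∧ (∀ c ∈ C, ‖c‖ ≤ 1) ∧
      ∀ x : F, ‖x‖ ≤ 1 → ∃! c, c ∈ C ∧ ‖x - c‖ < 1)
    (vol : Measure F) [Measure.IsAddHaarMeasure vol]
    (hvol : vol {x : F | ‖x‖ ≤ 1} = 1)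
    (χ : F → ℂ) (hχadd : ∀ x y : F, χ (x + y) = χ x * χ y)
    (hχtriv : ∀ x : F, ‖x‖ ≤ 1 → χ x = 1)
    (hχnontriv : ∃ x : F, ‖x‖ ≤ (q : ℝ) ∧ χ x ≠ 1) :
    (∀ x : F, ‖x‖ ≤ 1 →
      (∫ z₁ in {z : F | ‖z‖ ≤ 1}, ∫ z₂ in {z : F | ‖z‖ ≤ 1},
          χ (z₁ * z₂ * x) ∂vol ∂vol) = 1)
    ∧
    (∀ (x : F) (ℓ : ℤ), ‖x‖ = (q : ℝ) ^ ℓ → 1 ≤ ℓ →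
      (∫ z₁ in {z : F | ‖z‖ ≤ 1}, ∫ z₂ in {z : F | ‖z‖ ≤ 1},
          χ (z₁ * z₂ * x) ∂vol ∂vol) = (((q : ℝ) ^ (-ℓ) : ℝ) : ℂ)) := by
  have hgap : ∀ x : F, ‖x‖ < 1 → ‖x‖ ≤ (q : ℝ)⁻¹ := fun x => norm_le_inv_of_norm_lt_one hϖ hϖgen
  have hO : {z : F | ‖z‖ ≤ 1} = closedBall 0 1 := by ext; simp
  refine ⟨fun x hx => ?_, fun x ℓ hx hℓ => ?_⟩
  · have hsub : {z : F | ‖z‖ ≤ 1} ⊆ {z | ‖z * x‖ ≤ 1} := fun z hz =>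
      (norm_mul_le z x).trans (mul_le_one₀ hz (norm_nonneg _) hx)
    rw [theta_eq_measureReal hgap vol hvol hχadd hχtriv hχnontriv, Set.inter_eq_left.mpr hsub]
    simp [measureReal_def, hvol]
  · lift ℓ to ℕ using by omega
    have hq₀ : (0 : ℝ) < q := Nat.cast_pos.mpr (by omega)
    have hball : {z : F | ‖z‖ ≤ 1} ∩ {z | ‖z * x‖ ≤ 1} = closedBall 0 ((q : ℝ)⁻¹ ^ ℓ) := by
      ext z
      simp only [Set.mem_inter_iff, Set.mem_ofPred_eq, mem_closedBall, dist_zero_right, norm_mul,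
        hx, zpow_natCast, ← le_div_iff₀ (pow_pos hq₀ ℓ), one_div, inv_pow]
      exact and_iff_right_of_imp fun h =>
        h.trans (inv_le_one_of_one_le₀ (one_le_pow₀ (by exact_mod_cast hq.le)))
    rw [theta_eq_measureReal hgap vol hvol hχadd hχtriv hχnontriv, hball, measureReal_def,
      measure_closedBall_inv_pow hq hϖ hϖgen hres vol (hO ▸ hvol)]
    simp

/-- the function `Θ(x) = ∫_{O_F × O_F} χ(z₁ z₂ x) dz₁ dz₂` equals `1` for
`‖x‖ ≤ 1` and equals `q^{-ℓ}` for `‖x‖ = q^ℓ` with `ℓ ≥ 1`. -/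
theorem Theta_formula {F : Type*} [NormedField F] [CompleteSpace F]
    [IsUltrametricDist F] [LocallyCompactSpace F] [MeasurableSpace F] [BorelSpace F]
    (q : ℕ) (hq : 1 < q) (ϖ : F) (hϖ : ‖ϖ‖ = (q : ℝ)⁻¹)
    (hϖgen : ∀ x : F, ‖x‖ < 1 → ∃ c : F, ‖c‖ ≤ 1 ∧ x = ϖ * c)
    (hres : ∃ C : Finset F, C.card = q ∧ (∀ c ∈ C, ‖c‖ ≤ 1) ∧
      ∀ x : F, ‖x‖ ≤ 1 → ∃! c, c ∈ C ∧ ‖x - c‖ < 1)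
    (vol : Measure F) [Measure.IsAddHaarMeasure vol]
    (hvol : vol {x : F | ‖x‖ ≤ 1} = 1)
    (χ : F → ℂ) (hχadd : ∀ x y : F, χ (x + y) = χ x * χ y)
    (hχcont : Continuous χ) (hχnorm : ∀ x : F, ‖χ x‖ = 1)
    (hχtriv : ∀ x : F, ‖x‖ ≤ 1 → χ x = 1)
    (hχnontriv : ∃ x : F, ‖x‖ ≤ (q : ℝ) ∧ χ x ≠ 1) :
    (∀ x : F, ‖x‖ ≤ 1 →
      (∫ z₁ in {z : F | ‖z‖ ≤ 1}, ∫ z₂ in {z : F | ‖z‖ ≤ 1},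
          χ (z₁ * z₂ * x) ∂vol ∂vol) = 1)
    ∧
    (∀ (x : F) (ℓ : ℤ), ‖x‖ = (q : ℝ) ^ ℓ → 1 ≤ ℓ →
      (∫ z₁ in {z : F | ‖z‖ ≤ 1}, ∫ z₂ in {z : F | ‖z‖ ≤ 1},
          χ (z₁ * z₂ * x) ∂vol ∂vol) = (((q : ℝ) ^ (-ℓ) : ℝ) : ℂ)) :=
  Theta_formula_general q hq ϖ hϖ hϖgen hres vol hvol χ hχadd hχtriv hχnontriv
end

section
/- Let Δ be the set of nonincreasing sequences (k_j)_{j≥1} with values in ℤ ∪ {−∞}. For ℓ ∈ ℤ and k ∈ Δ set f_ℓ(k) := ∑_{j=1}^{∞} (k_j + ℓ)·1_{k_j + ℓ ≥ 1} ∈ ℕ ∪ {+∞} (terms with k_j = −∞ contribute 0). Then the map k ↦ (f_ℓ(k))_{ℓ∈ℤ} from Δ to (ℕ ∪ {+∞})^{ℤ} is injective: if k, k̃ ∈ Δ satisfy f_ℓ(k) = f_ℓ(k̃) for every ℓ ∈ ℤ, then k_j = k̃_j for all j. -/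
/-!
If `k ≠ k'`, let `j` be the first index where they differ, say `k' j < k j = m`. For the shift
`ℓ = 1 - m` only entries `≥ m` contribute, so `f_ℓ(k')` is the finite sum of the (common) first
`j` contributions, while `f_ℓ(k)` exceeds it by at least the contribution `1` of `k j`.
-/

open scoped ENNReal

/-- The contribution `(k + ℓ)·1_{k + ℓ ≥ 1}` of one entry `k ∈ ℤ ∪ {-∞}`,
with `-∞` contributing `0`. -/
noncomputable def contrib (ℓ : ℤ) : WithBot ℤ → ℝ≥0∞ :=
  fun x => WithBot.recBotCoe 0 (fun k : ℤ => ((k + ℓ).toNat : ℝ≥0∞)) x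

/-!
If `k ≠ k'`, let `j` be the first index where they differ, say `k' j < k j = m`. For the shift
`ℓ = 1 - m` only entries `≥ m` contribute, so `f_ℓ(k')` is the finite sum of the (common) first
`j` contributions, while `f_ℓ(k)` exceeds it by at least the contribution `1` of `k j`.
-/

open Finset

@[simp] lemma contrib_bot (ℓ : ℤ) : contrib ℓ ⊥ = 0 := rfl

@[simp] lemma contrib_coe (ℓ m : ℤ) : contrib ℓ m = ((m + ℓ).toNat : ℝ≥0∞) := rfl

lemma contrib_ne_top (ℓ : ℤ) (x : WithBot ℤ) : contrib ℓ x ≠ ∞ := by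
  cases x <;> simp

lemma contrib_one_sub_self (m : ℤ) : contrib (1 - m) m = 1 := by
  simp

lemma contrib_one_sub_eq_zero_of_lt {m : ℤ} {x : WithBot ℤ} (hx : x < m) :
    contrib (1 - m) x = 0 := by
  cases x with
  | bot => rfl
  | coe n =>
    have : n + (1 - m) ≤ 0 := by have := WithBot.coe_lt_coe.mp hx; omega
    simp [Int.toNat_of_nonpos this]

section

variable {k k' : ℕ → WithBot ℤ}

lemma tsum_contrib_one_sub_eq_sum_range (hk' : Antitone k') {j : ℕ} {m : ℤ} (hj : k' j < m) :
    ∑' i, contrib (1 - m) (k' i) = ∑ i ∈ range j, contrib (1 - m) (k' i) :=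
  tsum_eq_sum fun _ hi =>
    contrib_one_sub_eq_zero_of_lt <| (hk' (not_lt.mp (mem_range.not.mp hi))).trans_lt hj

lemma not_lt_of_tsum_contrib_eq (hk' : Antitone k')
    (h : ∀ ℓ : ℤ, ∑' j : ℕ, contrib ℓ (k j) = ∑' j : ℕ, contrib ℓ (k' j))
    {j : ℕ} (hagree : ∀ i < j, k i = k' i) : ¬ k' j < k j := by
  intro hlt
  obtain ⟨m, hm⟩ := WithBot.ne_bot_iff_exists.mp hlt.ne_bot
  set S := ∑ i ∈ range j, contrib (1 - m) (k' i)
  have hS : S ≠ ∞ := ENNReal.sum_ne_top.mpr fun _ _ => contrib_ne_top _ _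
  have hprefix : ∑ i ∈ range j, contrib (1 - m) (k i) = S :=
    sum_congr rfl fun i hi => by rw [hagree i (mem_range.mp hi)]
  have : S + 1 ≤ S :=
    calc S + 1 = ∑ i ∈ range (j + 1), contrib (1 - m) (k i) := by
          rw [sum_range_succ, hprefix, ← hm, contrib_one_sub_self]
      _ ≤ ∑' i, contrib (1 - m) (k i) := ENNReal.sum_le_tsum _
      _ = S := by rw [h, tsum_contrib_one_sub_eq_sum_range hk' (hm ▸ hlt)]
  exact (ENNReal.lt_add_right hS one_ne_zero).not_ge this

end

/-- the map `k ↦ (∑_j (k_j + ℓ)·1_{k_j + ℓ ≥ 1})_{ℓ ∈ ℤ}` is injective on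
the set `Δ` of nonincreasing sequences with values in `ℤ ∪ {-∞}`. -/
theorem delta_injective (k k' : ℕ → WithBot ℤ) (hk : Antitone k) (hk' : Antitone k')
    (h : ∀ ℓ : ℤ, ∑' j : ℕ, contrib ℓ (k j) = ∑' j : ℕ, contrib ℓ (k' j)) :
    k = k' := by
  funext j
  induction j using Nat.strong_induction_on with
  | _ j hagree =>
    exact le_antisymm
      (not_lt.mp <| not_lt_of_tsum_contrib_eq hk' h hagree)
      (not_lt.mp <| not_lt_of_tsum_contrib_eq hk (fun ℓ => (h ℓ).symm)
        fun i hi => (hagree i hi).symm)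
end

section
/- Let Δ be the set of nonincreasing sequences (k_j)_{j≥1} with values in ℤ ∪ {−∞}, equipped with the subspace topology of the product topology on (ℤ ∪ {−∞})^{ℕ} where ℤ ∪ {−∞} carries the discrete topology. For each fixed ℓ ∈ ℤ, the map f : Δ → ℕ ∪ {+∞} defined by f(k) := ∑_{j=1}^{∞} (k_j + ℓ)·1_{k_j + ℓ ≥ 1} (terms with k_j = −∞ contributing 0) is continuous, where ℕ ∪ {+∞} carries the order topology. -/
/-!
Near a sequence `k ∈ Δ` the neighbourhoods are the sequences agreeing with `k` on a finite
prefix. If some term `contrib ℓ (k j)` vanishes, then by monotonicity every later term of every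
sequence agreeing with `k` up to `j` vanishes too, so the sum is locally a constant finite sum.
Otherwise every term is at least `1`, so the sum is `∞` and is at least `N` on the neighbourhood
fixing the first `N` entries.
-/

open scoped ENNReal

open Filter Topology

theorem contrib_mono (ℓ : ℤ) : Monotone (contrib ℓ) := by
  intro x y hxy
  induction x using WithBot.recBotCoe with
  | bot => simp [contrib]
  | coe a =>
    induction y using WithBot.recBotCoe with
    | bot => exact absurd hxy (by simp)
    | coe b =>
      simp only [contrib, WithBot.recBotCoe_coe, Nat.cast_le]
      exact Int.toNat_le_toNat (add_le_add_left (WithBot.coe_le_coe.1 hxy) ℓ)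

theorem one_le_contrib_of_ne_zero (ℓ : ℤ) (x : WithBot ℤ) (h : contrib ℓ x ≠ 0) :
    1 ≤ contrib ℓ x := by
  induction x using WithBot.recBotCoe with
  | bot => simp [contrib] at h
  | coe a =>
    simp only [contrib, WithBot.recBotCoe_coe, ne_eq, Nat.cast_eq_zero] at h ⊢
    exact_mod_cast Nat.one_le_iff_ne_zero.2 h

theorem ENNReal.natCast_le_tsum_of_one_le {v : ℕ → ℝ≥0∞} {N : ℕ} (hv : ∀ i < N, 1 ≤ v i) :
    (N : ℝ≥0∞) ≤ ∑' i, v i :=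
  calc (N : ℝ≥0∞) = ∑ _i ∈ Finset.range N, 1 := by simp
    _ ≤ ∑ i ∈ Finset.range N, v i := Finset.sum_le_sum fun i hi => hv i (Finset.mem_range.1 hi)
    _ ≤ ∑' i, v i := ENNReal.sum_le_tsum _

theorem tsum_comp_antitone_eq_sum_range {β : Type*} [Preorder β] {g : β → ℝ≥0∞}
    (hg : Monotone g) {u : ℕ → β} (hu : Antitone u) {j : ℕ} (hj : g (u j) = 0) :
    ∑' i, g (u i) = ∑ i ∈ Finset.range j, g (u i) :=
  tsum_eq_sum fun _ hi =>
    nonpos_iff_eq_zero.1 <| hj ▸ hg (hu (not_lt.1 (Finset.mem_range.not.1 hi)))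

theorem eventually_forall_lt_apply_eq {X β : Type*} [TopologicalSpace X] [TopologicalSpace β]
    [DiscreteTopology β] {k : X → ℕ → β} (hk : Continuous k) (x : X) (N : ℕ) :
    ∀ᶠ y in 𝓝 x, ∀ i < N, k y i = k x i :=
  (Set.finite_lt_nat N).eventually_all.2 fun i _ =>
    ((continuous_apply i).comp hk).continuousAt (isOpen_discrete {k x i} |>.mem_nhds rfl)

theorem continuous_tsum_comp_antitone {X β : Type*} [TopologicalSpace X] [TopologicalSpace β]
    [DiscreteTopology β] [Preorder β] {g : β → ℝ≥0∞} (hg : Monotone g)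
    (hg_one : ∀ b, g b ≠ 0 → 1 ≤ g b) {k : X → ℕ → β} (hk : Continuous k)
    (hk_anti : ∀ x, Antitone (k x)) : Continuous fun x => ∑' j, g (k x j) := by
  refine continuous_iff_continuousAt.2 fun x => ?_
  by_cases hzero : ∃ j, g (k x j) = 0
  · obtain ⟨j, hj⟩ := hzero
    refine (continuousAt_const (y := ∑ i ∈ Finset.range j, g (k x i))).congr ?_
    filter_upwards [eventually_forall_lt_apply_eq hk x (j + 1)] with y hy
    rw [tsum_comp_antitone_eq_sum_range hg (hk_anti y) (j := j) (by rwa [hy j j.lt_succ_self])]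
    exact Finset.sum_congr rfl fun i hi => by rw [hy i (Nat.lt_succ_of_lt (Finset.mem_range.1 hi))]
  · push Not at hzero
    have hlarge (n : ℕ) : ∀ᶠ y in 𝓝 x, (n : ℝ≥0∞) < ∑' i, g (k y i) := by
      filter_upwards [eventually_forall_lt_apply_eq hk x (n + 1)] with y hy
      refine (Nat.cast_lt.2 n.lt_succ_self).trans_le ?_
      exact ENNReal.natCast_le_tsum_of_one_le fun i hi => hy i hi ▸ hg_one _ (hzero i)
    have htop : ∑' i, g (k x i) = ∞ := ENNReal.eq_top_of_forall_nnreal_le fun r => by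
      obtain ⟨n, hn⟩ := exists_nat_gt r
      exact (ENNReal.coe_le_coe.2 hn.le).trans (by simpa using ((hlarge n).self_of_nhds).le)
    rw [ContinuousAt, htop]
    exact ENNReal.tendsto_nhds_top hlarge

/-- for each fixed `ℓ ∈ ℤ`, the map
`k ↦ ∑_j (k_j + ℓ)·1_{k_j + ℓ ≥ 1}` is continuous from the set `Δ` of nonincreasing
sequences in `ℤ ∪ {-∞}` (a subspace of the product of discrete spaces `ℤ ∪ {-∞}`)
to `ℕ ∪ {+∞}` with the order topology. -/
theorem delta_sum_continuous (ℓ : ℤ) :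
    @Continuous {k : ℕ → WithBot ℤ // Antitone k} ℝ≥0∞
      (TopologicalSpace.induced Subtype.val
        (@Pi.topologicalSpace ℕ (fun _ => WithBot ℤ) fun _ => ⊥))
      inferInstance
      (fun k => ∑' j : ℕ, contrib ℓ (k.1 j)) := by
  let _ : TopologicalSpace (WithBot ℤ) := ⊥
  have : DiscreteTopology (WithBot ℤ) := ⟨rfl⟩
  exact continuous_tsum_comp_antitone (contrib_mono ℓ) (one_le_contrib_of_ne_zero ℓ)
    continuous_subtype_val fun k => k.2
end
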